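/- arXiv:1801.05398 — 2 statements merged into one kernel-verified Lean document; each statement's English description precedes it below -/
import Mathlib

section
/- If λ₂ = 0 and λ₄ > 0 and b₁ = E[g_l(Y)g_m(Y)|S=0] ≠ 0, then the function f* = −sign(b₁)·f_m minimizes Δ_λ(f) over all f ∈ 𝓛(P_{X|S=0}). -/
/-!
With `λ₂ = 0`, every term of `L_λ` except the `λ₄` one is a KL divergence from the base point
itself, whose first variation vanishes. Since the first-order change `c` of the output law has
total mass zero, `Δ_λ(f) = λ₄ ∑_y c(y) log (P_{Y|S=0}(y) / P_{Y|S=1}(y))`. On a binary alphabet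
the mean-zero functions form a line spanned by the unit score `g_m`, so the centred
log-likelihood ratio is `g_l = b₁ g_m` and `Δ_λ(f) = λ₄ b₁ ρ_m E[f f_m | S=0]
= -λ₄ ρ_m |b₁| E[f f* | S=0]`. Among unit-variance `f` this correlation with `f*` is largest,
namely `1`, at `f = f*`.
-/

open Filter Topology

/-- Kullback–Leibler divergence between distributions on a finite set. -/
noncomputable def KLdiv {α : Type*} [Fintype α] (P Q : α → ℝ) : ℝ :=
  ∑ a, P a * Real.log (P a / Q a)

/-- The objective `L_λ` evaluated at the perturbed distribution
`P̃_{X|S=0}(x) = P0(x)(1+εf(x))`, with `P̃_{Y|S=0} = W ∘ P̃_{X|S=0}`.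
At `ε = 0` this is `L_λ(P_{X|S=0})`. -/
noncomputable def Lobj {𝒳 : Type*} [Fintype 𝒳]
    (P0 P1 : 𝒳 → ℝ) (W : 𝒳 → Bool → ℝ) (Q0 Q1 : Bool → ℝ)
    (l1 l2 l3 l4 : ℝ) (f : 𝒳 → ℝ) (ε : ℝ) : ℝ :=
  l1 * KLdiv (fun x => P0 x * (1 + ε * f x)) P0
    + l2 * KLdiv (fun x => P0 x * (1 + ε * f x)) P1
    + l3 * KLdiv (fun y => ∑ x, P0 x * (1 + ε * f x) * W x y) Q0
    + l4 * KLdiv (fun y => ∑ x, P0 x * (1 + ε * f x) * W x y) Q1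

open Real Finset

lemma hasDerivAt_mul_log_div {a c : ℝ} (b : ℝ) (ha : 0 < a) (hc : c ≠ 0) :
    HasDerivAt (fun ε : ℝ => (a + ε * b) * log ((a + ε * b) / c)) (b * (log (a / c) + 1)) 0 := by
  have hu : HasDerivAt (fun ε : ℝ => a + ε * b) b 0 := by
    simpa using ((hasDerivAt_id (0 : ℝ)).mul_const b).const_add a
  have hlog := (hu.div_const c).log (by simpa using div_ne_zero ha.ne' hc)
  refine (hu.mul hlog).congr_deriv ?_
  field_simp
  simp [ha.ne']

lemma hasDerivAt_KLdiv_add_smul {α : Type*} [Fintype α] {P Q : α → ℝ} (v : α → ℝ)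
    (hP : ∀ a, 0 < P a) (hQ : ∀ a, Q a ≠ 0) :
    HasDerivAt (fun ε : ℝ => KLdiv (fun a => P a + ε * v a) Q)
      (∑ a, v a * (log (P a / Q a) + 1)) 0 :=
  HasDerivAt.fun_sum fun a _ => hasDerivAt_mul_log_div (v a) (hP a) (hQ a)

lemma hasDerivAt_KLdiv_add_smul_self {α : Type*} [Fintype α] {P v : α → ℝ}
    (hP : ∀ a, 0 < P a) (hv : ∑ a, v a = 0) :
    HasDerivAt (fun ε : ℝ => KLdiv (fun a => P a + ε * v a) P) 0 0 := by
  convert hasDerivAt_KLdiv_add_smul v hP fun a => (hP a).ne'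
  simp [div_self (hP _).ne', hv]

noncomputable def channelPush {𝒳 𝒴 : Type*} [Fintype 𝒳] (P : 𝒳 → ℝ) (W : 𝒳 → 𝒴 → ℝ)
    (y : 𝒴) : ℝ :=
  ∑ x, P x * W x y

lemma sum_channelPush_mul {𝒳 𝒴 : Type*} [Fintype 𝒳] [Fintype 𝒴] (P : 𝒳 → ℝ)
    (W : 𝒳 → 𝒴 → ℝ) (h : 𝒴 → ℝ) :
    ∑ y, channelPush P W y * h y = ∑ x, P x * ∑ y, W x y * h y := by
  simp only [channelPush, sum_mul, mul_sum, mul_assoc]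
  exact sum_comm

lemma sum_channelPush_eq_zero {𝒳 : Type*} [Fintype 𝒳] {P : 𝒳 → ℝ} {W : 𝒳 → Bool → ℝ}
    (hW : ∀ x, W x false + W x true = 1) (hP : ∑ x, P x = 0) :
    ∑ y, channelPush P W y = 0 := by
  simpa [Fintype.sum_bool, hW, add_comm, hP] using sum_channelPush_mul P W 1

lemma hasDerivAt_Lobj {𝒳 : Type*} [Fintype 𝒳] {P0 P1 : 𝒳 → ℝ} {W : 𝒳 → Bool → ℝ}
    {Q0 Q1 : Bool → ℝ} (l1 l3 l4 : ℝ) {f : 𝒳 → ℝ} (hP0pos : ∀ x, 0 < P0 x)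
    (hWsum : ∀ x, W x false + W x true = 1) (hQ0 : ∀ y, Q0 y = channelPush P0 W y)
    (hQ0pos : ∀ y, 0 < Q0 y) (hQ1pos : ∀ y, 0 < Q1 y) (hf0 : ∑ x, P0 x * f x = 0) :
    HasDerivAt (Lobj P0 P1 W Q0 Q1 l1 0 l3 l4 f)
      (l4 * ∑ y, channelPush (fun x => P0 x * f x) W y * log (Q0 y / Q1 y)) 0 := by
  set c := channelPush (fun x => P0 x * f x) W
  have hc : ∑ y, c y = 0 := sum_channelPush_eq_zero hWsum hf0
  have hout : ∀ ε : ℝ, (fun y => ∑ x, P0 x * (1 + ε * f x) * W x y) = fun y => Q0 y + ε * c y := by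
    intro ε; ext y
    simp only [hQ0, c, channelPush, mul_sum, ← sum_add_distrib]
    exact sum_congr rfl fun x _ => by ring
  have hL : Lobj P0 P1 W Q0 Q1 l1 0 l3 l4 f = fun ε =>
      l1 * KLdiv (fun x => P0 x + ε * (P0 x * f x)) P0 + l3 * KLdiv (fun y => Q0 y + ε * c y) Q0
        + l4 * KLdiv (fun y => Q0 y + ε * c y) Q1 := by
    ext ε
    simp only [Lobj, hout, zero_mul, add_zero]
    simp only [mul_one_add, mul_left_comm]
  rw [hL]
  refine ((((hasDerivAt_KLdiv_add_smul_self hP0pos hf0).const_mul l1).add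
    ((hasDerivAt_KLdiv_add_smul_self hQ0pos hc).const_mul l3)).add
    ((hasDerivAt_KLdiv_add_smul c hQ0pos fun y => (hQ1pos y).ne').const_mul l4)).congr_deriv ?_
  simp only [mul_zero, zero_add, mul_add, mul_one, sum_add_distrib, hc, add_zero]

lemma hasDerivAt_Lobj_of_log_div_eq {𝒳 : Type*} [Fintype 𝒳] {P0 P1 : 𝒳 → ℝ}
    {W : 𝒳 → Bool → ℝ} {Q0 Q1 g : Bool → ℝ} (l1 l3 l4 : ℝ) {b K : ℝ} {f : 𝒳 → ℝ}
    (hP0pos : ∀ x, 0 < P0 x) (hWsum : ∀ x, W x false + W x true = 1)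
    (hQ0 : ∀ y, Q0 y = channelPush P0 W y) (hQ0pos : ∀ y, 0 < Q0 y) (hQ1pos : ∀ y, 0 < Q1 y)
    (hlog : ∀ y, log (Q0 y / Q1 y) = b * g y + K) (hf0 : ∑ x, P0 x * f x = 0) :
    HasDerivAt (Lobj P0 P1 W Q0 Q1 l1 0 l3 l4 f)
      (l4 * b * ∑ x, P0 x * f x * ∑ y, W x y * g y) 0 := by
  refine (hasDerivAt_Lobj l1 l3 l4 hP0pos hWsum hQ0 hQ0pos hQ1pos hf0).congr_deriv ?_
  have hc := sum_channelPush_eq_zero (P := fun x => P0 x * f x) hWsum hf0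
  simp only [hlog, mul_add, sum_add_distrib, ← sum_mul, hc, zero_mul, add_zero,
    mul_left_comm _ b, ← mul_sum, sum_channelPush_mul, mul_assoc]

lemma sum_mul_eq_zero_and_sum_mul_sq_eq_one_of_binary {Q g : Bool → ℝ} (hQ : ∀ y, 0 < Q y)
    (hQsum : Q false + Q true = 1) (hgf : g false = √(Q true / (1 - Q true)))
    (hgt : g true = -√((1 - Q true) / Q true)) :
    ∑ y, Q y * g y = 0 ∧ ∑ y, Q y * g y ^ 2 = 1 := by
  have hf := hQ false
  have ht := hQ true
  rw [show 1 - Q true = Q false by linarith] at hgf hgt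
  have hf2 : Q false * g false ^ 2 = Q true := by
    rw [hgf, sq_sqrt (by positivity)]; field_simp
  have ht2 : Q true * g true ^ 2 = Q false := by
    rw [hgt, neg_sq, sq_sqrt (by positivity)]; field_simp
  have hprod : g false * g true = -1 := by
    rw [hgf, hgt, mul_neg, ← sqrt_mul (by positivity), div_mul_div_comm, mul_comm (Q true),
      div_self (by positivity), sqrt_one]
  have hpos : 0 < g false := by rw [hgf]; positivity
  simp only [Fintype.sum_bool]
  refine ⟨mul_left_cancel₀ hpos.ne' ?_, by linarith⟩
  linear_combination hf2 + Q true * hprod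

lemma eq_sum_mul_mul_mul_of_sum_mul_eq_zero {Q u v : Bool → ℝ} (hQ : Q false ≠ 0)
    (hu : ∑ y, Q y * u y = 0) (hv : ∑ y, Q y * v y = 0) (hv2 : ∑ y, Q y * v y ^ 2 = 1)
    (y : Bool) : u y = (∑ y, Q y * (u y * v y)) * v y := by
  simp only [Fintype.sum_bool] at *
  have hprop : u false * v true = u true * v false :=
    mul_left_cancel₀ hQ (by linear_combination v true * hu - u true * hv)
  cases y
  · linear_combination -hv2 * u false + Q true * v true * hprop
  · linear_combination -hv2 * u true - Q false * v false * hprop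

lemma log_div_eq_mul_add_of_binary {Q0 Q1 gl gm : Bool → ℝ} {b : ℝ} (hQ0 : Q0 false ≠ 0)
    (hQsum : Q0 false + Q0 true = 1)
    (hgl : ∀ y, gl y = log (Q0 y / Q1 y) - ∑ y', Q0 y' * log (Q0 y' / Q1 y'))
    (hgm0 : ∑ y, Q0 y * gm y = 0) (hgm2 : ∑ y, Q0 y * gm y ^ 2 = 1)
    (hb : b = ∑ y, Q0 y * (gl y * gm y)) (y : Bool) :
    log (Q0 y / Q1 y) = b * gm y + ∑ y', Q0 y' * log (Q0 y' / Q1 y') := by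
  have hgl0 : ∑ y, Q0 y * gl y = 0 := by
    simp only [hgl, mul_sub, sum_sub_distrib, ← sum_mul, Fintype.sum_bool, add_comm (Q0 true),
      hQsum, one_mul, sub_self]
  have hglgm := eq_sum_mul_mul_mul_of_sum_mul_eq_zero hQ0 hgl0 hgm0 hgm2 y
  rw [← hb, hgl] at hglgm
  linarith

lemma sum_mul_div_sq_eq_one {ι : Type*} [Fintype ι] {P h : ι → ℝ} {ρ : ℝ}
    (hP : ∀ i, 0 ≤ P i) (hρ : ρ = √(∑ i, P i * h i ^ 2)) (hρpos : 0 < ρ) :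
    ∑ i, P i * (h i / ρ) ^ 2 = 1 := by
  have hρ2 : ρ ^ 2 = ∑ i, P i * h i ^ 2 := by
    rw [hρ, sq_sqrt (sum_nonneg fun i _ => mul_nonneg (hP i) (sq_nonneg _))]
  simp only [div_pow, ← mul_div_assoc, ← sum_div, ← hρ2]
  exact div_self (by positivity)

lemma sum_mul_mul_le_one {ι : Type*} [Fintype ι] {P f g : ι → ℝ} (hP : ∀ i, 0 ≤ P i)
    (hf : ∑ i, P i * f i ^ 2 = 1) (hg : ∑ i, P i * g i ^ 2 = 1) :
    ∑ i, P i * f i * g i ≤ 1 := by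
  have hsq : 0 ≤ ∑ i, P i * (f i - g i) ^ 2 :=
    sum_nonneg fun i _ => mul_nonneg (hP i) (sq_nonneg _)
  have hexp : ∑ i, P i * (f i - g i) ^ 2
      = ∑ i, P i * f i ^ 2 + ∑ i, P i * g i ^ 2 - 2 * ∑ i, P i * f i * g i := by
    rw [mul_sum, ← sum_add_distrib, ← sum_sub_distrib]
    exact sum_congr rfl fun i _ => by ring
  linarith

lemma HasDerivAt.eq_of_tendsto_div_nhdsGT {g : ℝ → ℝ} {d D : ℝ} (hg : HasDerivAt g d 0)
    (hD : Tendsto (fun ε => (g ε - g 0) / ε) (𝓝[>] 0) (𝓝 D)) : D = d :=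
  tendsto_nhds_unique hD <| by simpa [div_eq_inv_mul] using hg.tendsto_slope_zero_right

lemma le_of_hasDerivAt_eq_neg_mul_sum_mul {𝒳 : Type*} [Fintype 𝒳] {P fstar f : 𝒳 → ℝ}
    {L : (𝒳 → ℝ) → ℝ → ℝ} {c Dstar D : ℝ} (hP : ∀ x, 0 ≤ P x) (hc : 0 ≤ c)
    (hL : ∀ g, ∑ x, P x * g x = 0 → HasDerivAt (L g) (-c * ∑ x, P x * g x * fstar x) 0)
    (hstar0 : ∑ x, P x * fstar x = 0) (hstar2 : ∑ x, P x * fstar x ^ 2 = 1)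
    (hf0 : ∑ x, P x * f x = 0) (hf2 : ∑ x, P x * f x ^ 2 = 1)
    (hDstar : Tendsto (fun ε => (L fstar ε - L fstar 0) / ε) (𝓝[>] 0) (𝓝 Dstar))
    (hD : Tendsto (fun ε => (L f ε - L f 0) / ε) (𝓝[>] 0) (𝓝 D)) :
    Dstar ≤ D := by
  rw [(hL fstar hstar0).eq_of_tendsto_div_nhdsGT hDstar, (hL f hf0).eq_of_tendsto_div_nhdsGT hD]
  have hself : ∑ x, P x * fstar x * fstar x = 1 := by simpa [mul_assoc, sq] using hstar2
  have hle := sum_mul_mul_le_one hP hf2 hstar2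
  rw [hself]
  nlinarith

theorem stmt5_general
    {𝒳 : Type*} [Fintype 𝒳]
    (P0 P1 : 𝒳 → ℝ)
    (hP0pos : ∀ x, 0 < P0 x) (hP0sum : ∑ x, P0 x = 1)
    (W : 𝒳 → Bool → ℝ)
    (hWsum : ∀ x, W x false + W x true = 1)
    (Q0 Q1 : Bool → ℝ)
    (hQ0 : ∀ y, Q0 y = ∑ x, P0 x * W x y)
    (hQ0pos : ∀ y, 0 < Q0 y) (hQ1pos : ∀ y, 0 < Q1 y)
    (l1 l2 l3 l4 : ℝ)
    (hl2 : l2 = 0) (hl4 : 0 < l4)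
    (gl : Bool → ℝ)
    (hgl : ∀ y, gl y = Real.log (Q0 y / Q1 y) - ∑ y', Q0 y' * Real.log (Q0 y' / Q1 y'))
    (gm : Bool → ℝ)
    (hgmf : gm false = Real.sqrt (Q0 true / (1 - Q0 true)))
    (hgmt : gm true = -Real.sqrt ((1 - Q0 true) / Q0 true))
    (ρm : ℝ)
    (hρm : ρm = Real.sqrt (∑ x, P0 x * (gm false * W x false + gm true * W x true) ^ 2))
    (hρmpos : 0 < ρm)
    (fm : 𝒳 → ℝ)
    (hfm : ∀ x, fm x = (gm false * W x false + gm true * W x true) / ρm)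
    (b1 : ℝ)
    (hb1 : b1 = ∑ y, Q0 y * (gl y * gm y))
    (hb1ne : b1 ≠ 0)
    (fstar : 𝒳 → ℝ)
    (hfstar : ∀ x, fstar x = -Real.sign b1 * fm x) :
    ((∑ x, P0 x * fstar x = 0) ∧ (∑ x, P0 x * fstar x ^ 2 = 1)) ∧
      ∀ f : 𝒳 → ℝ, (∑ x, P0 x * f x = 0) → (∑ x, P0 x * f x ^ 2 = 1) →
        ∀ Dstar D : ℝ,
          Tendsto
            (fun ε : ℝ =>
              (Lobj P0 P1 W Q0 Q1 l1 l2 l3 l4 fstar ε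
                - Lobj P0 P1 W Q0 Q1 l1 l2 l3 l4 fstar 0) / ε)
            (nhdsWithin 0 (Set.Ioi 0)) (nhds Dstar) →
          Tendsto
            (fun ε : ℝ =>
              (Lobj P0 P1 W Q0 Q1 l1 l2 l3 l4 f ε
                - Lobj P0 P1 W Q0 Q1 l1 l2 l3 l4 f 0) / ε)
            (nhdsWithin 0 (Set.Ioi 0)) (nhds D) →
          Dstar ≤ D := by
  subst hl2
  have hQ0' : Q0 = channelPush P0 W := funext hQ0
  have hQsum : Q0 false + Q0 true = 1 := by
    simpa [Fintype.sum_bool, ← hQ0', hWsum, add_comm, hP0sum] using sum_channelPush_mul P0 W 1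
  obtain ⟨hgm0, hgm2⟩ :=
    sum_mul_eq_zero_and_sum_mul_sq_eq_one_of_binary hQ0pos hQsum hgmf hgmt
  have hlog := log_div_eq_mul_add_of_binary (hQ0pos false).ne' hQsum hgl hgm0 hgm2 hb1
  have hsign : Real.sign b1 ^ 2 = 1 := by
    rcases sign_apply_eq_of_ne_zero b1 hb1ne with h | h <;> simp [h]
  have hWgm : ∀ x, ∑ y, W x y * gm y = -(ρm * Real.sign b1) * fstar x := by
    intro x
    have hcancel := mul_div_cancel₀ (gm false * W x false + gm true * W x true) hρmpos.ne'
    rw [hfstar, hfm, Fintype.sum_bool]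
    linear_combination (-Real.sign b1 ^ 2) * hcancel
      - (gm false * W x false + gm true * W x true) * hsign
  have hfstar0 : ∑ x, P0 x * fstar x = 0 := by
    have h := sum_channelPush_mul P0 W gm
    simp only [← hQ0', hgm0, hWgm, mul_left_comm (P0 _), ← mul_sum] at h
    refine (mul_eq_zero.mp h.symm).resolve_left ?_
    simp [hρmpos.ne', Real.sign_eq_zero_iff, hb1ne]
  have hfstar2 : ∑ x, P0 x * fstar x ^ 2 = 1 := by
    simp only [hfstar, hfm, mul_pow, neg_sq, hsign, one_mul,
      sum_mul_div_sq_eq_one (fun x => (hP0pos x).le) hρm hρmpos]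
  have hΔ : ∀ f, ∑ x, P0 x * f x = 0 → HasDerivAt (Lobj P0 P1 W Q0 Q1 l1 0 l3 l4 f)
      (-(l4 * ρm * (Real.sign b1 * b1)) * ∑ x, P0 x * f x * fstar x) 0 := fun f hf0 =>
    (hasDerivAt_Lobj_of_log_div_eq l1 l3 l4 hP0pos hWsum hQ0 hQ0pos hQ1pos hlog hf0).congr_deriv
      (by simp only [hWgm, mul_left_comm _ (-(ρm * Real.sign b1)), ← mul_sum]; ring)
  have hpos : 0 < l4 * ρm * (Real.sign b1 * b1) := by
    have := sign_mul_pos_of_ne_zero b1 hb1ne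
    positivity
  exact ⟨⟨hfstar0, hfstar2⟩, fun f hf0 hf2 Dstar D =>
    le_of_hasDerivAt_eq_neg_mul_sum_mul (fun x => (hP0pos x).le) hpos.le hΔ hfstar0 hfstar2 hf0 hf2⟩

/-- Corollary 2 of the paper: if `λ₂ = 0`, `λ₄ > 0` and
`b₁ = E[g_l(Y)g_m(Y)|S=0] ≠ 0`, then `f* = −sign(b₁)·f_m` minimizes
`Δ_λ(f) = lim_{ε→0⁺}(L_λ(P̃_{X|S=0}) − L_λ(P_{X|S=0}))/ε` over all `f ∈ 𝓛(P_{X|S=0})`: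
`f* ∈ 𝓛(P_{X|S=0})` and whenever the limits `Δ_λ(f*) = Dstar` and `Δ_λ(f) = D` exist,
`Dstar ≤ D`. Setup (`𝒴 = Bool`, channel `W`, `P0/P1/Q0/Q1` full support, `g_l`, `g_m`,
`ρ_m`, `f_m`) as in the paper. -/
theorem stmt5
    {𝒳 : Type*} [Fintype 𝒳]
    (P0 P1 : 𝒳 → ℝ)
    (hP0pos : ∀ x, 0 < P0 x) (hP0sum : ∑ x, P0 x = 1)
    (hP1pos : ∀ x, 0 < P1 x) (hP1sum : ∑ x, P1 x = 1)
    (W : 𝒳 → Bool → ℝ)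
    (hWnn : ∀ x y, 0 ≤ W x y) (hWsum : ∀ x, W x false + W x true = 1)
    (Q0 Q1 : Bool → ℝ)
    (hQ0 : ∀ y, Q0 y = ∑ x, P0 x * W x y) (hQ1 : ∀ y, Q1 y = ∑ x, P1 x * W x y)
    (hQ0pos : ∀ y, 0 < Q0 y) (hQ1pos : ∀ y, 0 < Q1 y)
    (l1 l2 l3 l4 : ℝ)
    (hl1 : 0 ≤ l1) (hl2 : l2 = 0) (hl3 : 0 ≤ l3) (hl4 : 0 < l4)
    (gl : Bool → ℝ)
    (hgl : ∀ y, gl y = Real.log (Q0 y / Q1 y) - ∑ y', Q0 y' * Real.log (Q0 y' / Q1 y'))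
    (hp1 : Q0 true < 1)
    (gm : Bool → ℝ)
    (hgmf : gm false = Real.sqrt (Q0 true / (1 - Q0 true)))
    (hgmt : gm true = -Real.sqrt ((1 - Q0 true) / Q0 true))
    (ρm : ℝ)
    (hρm : ρm = Real.sqrt (∑ x, P0 x * (gm false * W x false + gm true * W x true) ^ 2))
    (hρmpos : 0 < ρm)
    (fm : 𝒳 → ℝ)
    (hfm : ∀ x, fm x = (gm false * W x false + gm true * W x true) / ρm)
    (b1 : ℝ)
    (hb1 : b1 = ∑ y, Q0 y * (gl y * gm y))
    (hb1ne : b1 ≠ 0)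
    (fstar : 𝒳 → ℝ)
    (hfstar : ∀ x, fstar x = -Real.sign b1 * fm x) :
    ((∑ x, P0 x * fstar x = 0) ∧ (∑ x, P0 x * fstar x ^ 2 = 1)) ∧
      ∀ f : 𝒳 → ℝ, (∑ x, P0 x * f x = 0) → (∑ x, P0 x * f x ^ 2 = 1) →
        ∀ Dstar D : ℝ,
          Tendsto
            (fun ε : ℝ =>
              (Lobj P0 P1 W Q0 Q1 l1 l2 l3 l4 fstar ε
                - Lobj P0 P1 W Q0 Q1 l1 l2 l3 l4 fstar 0) / ε)
            (nhdsWithin 0 (Set.Ioi 0)) (nhds Dstar) →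
          Tendsto
            (fun ε : ℝ =>
              (Lobj P0 P1 W Q0 Q1 l1 l2 l3 l4 f ε
                - Lobj P0 P1 W Q0 Q1 l1 l2 l3 l4 f 0) / ε)
            (nhdsWithin 0 (Set.Ioi 0)) (nhds D) →
          Dstar ≤ D :=
  stmt5_general P0 P1 hP0pos hP0sum W hWsum Q0 Q1 hQ0 hQ0pos hQ1pos l1 l2 l3 l4 hl2 hl4 gl hgl gm
    hgmf hgmt ρm hρm hρmpos fm hfm b1 hb1 hb1ne fstar hfstar
end

section
/- For every f:𝒳→ℝ with E[f(X)|S=0]=0, lim_{ε→0⁺} (D_KL(P̃_{Y|S=0}‖P_{Y|S=1}) − D_KL(P_{Y|S=0}‖P_{Y|S=1}))/ε = E[g(Y)·log(P_{Y|S=0}(Y)/P_{Y|S=1}(Y)) | S=0], where g(y) = E[f(X)|Y=y,S=0]. -/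
/-!
The perturbed output distribution is the line `Q0 + ε T` with `T = Q0 g`, and `∑ T = 0` because
`E[f(X) | S = 0] = 0` and `W` is stochastic. The limit is therefore the right derivative at `0` of
`ε ↦ D(Q0 + ε T ‖ Q1)`, namely `∑ T (log (Q0 / Q1) + 1)`, whose `+ 1` term vanishes.
-/

open Filter Topology

open Real

theorem sum_sum_mul_channel {𝒳 𝒴 : Type*} [Fintype 𝒳] [Fintype 𝒴] {W : 𝒳 → 𝒴 → ℝ}
    (hW : ∀ x, ∑ y, W x y = 1) (μ : 𝒳 → ℝ) : ∑ y, ∑ x, μ x * W x y = ∑ x, μ x := by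
  rw [Finset.sum_comm]
  simp only [← Finset.mul_sum, hW, mul_one]

theorem hasDerivAt_mul_log_div_s12 {p q : ℝ} (hp : p ≠ 0) (hq : q ≠ 0) :
    HasDerivAt (fun x => x * log (x / q)) (log (p / q) + 1) p := by
  have h := (hasDerivAt_id' p).fun_mul (((hasDerivAt_id' p).div_const q).log (div_ne_zero hp hq))
  rwa [one_mul, show p * (1 / q / (p / q)) = 1 by field_simp] at h

theorem hasDerivAt_KLdiv_add_mul {α : Type*} [Fintype α] {P Q : α → ℝ}
    (hP : ∀ a, P a ≠ 0) (hQ : ∀ a, Q a ≠ 0) (T : α → ℝ) :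
    HasDerivAt (fun ε => KLdiv (fun a => P a + ε * T a) Q)
      (∑ a, T a * (log (P a / Q a) + 1)) 0 := by
  refine HasDerivAt.fun_sum fun a _ => ?_
  have hline : HasDerivAt (fun ε : ℝ => P a + ε * T a) (T a) 0 := by
    simpa using ((hasDerivAt_id (0 : ℝ)).mul_const (T a)).const_add (P a)
  rw [mul_comm]
  exact (hasDerivAt_mul_log_div_s12 (hP a) (hQ a)).comp_of_eq 0 hline (by simp)

theorem tendsto_KLdiv_add_mul_slope_zero_right {α : Type*} [Fintype α] {P Q : α → ℝ}
    (hP : ∀ a, P a ≠ 0) (hQ : ∀ a, Q a ≠ 0) {T : α → ℝ} (hT : ∑ a, T a = 0) :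
    Tendsto (fun ε => (KLdiv (fun a => P a + ε * T a) Q - KLdiv P Q) / ε) (𝓝[>] 0)
      (𝓝 (∑ a, T a * log (P a / Q a))) := by
  have hderiv : ∑ a, T a * (log (P a / Q a) + 1) = ∑ a, T a * log (P a / Q a) := by
    simp only [mul_add, mul_one, Finset.sum_add_distrib, hT, add_zero]
  convert (hasDerivAt_KLdiv_add_mul hP hQ T).tendsto_slope_zero_right using 2 with ε
  · simp [div_eq_inv_mul]
  · exact hderiv.symm

/-- `W x y = W_{Y|X}(y|x)`, `P0 = P_{X|S=0}`, `Q0 = P_{Y|S=0}`, `Q1 = P_{Y|S=1}`; the perturbed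
input is `x ↦ P0 x (1 + ε f x)`. -/
theorem stmt12_general
    {𝒳 𝒴 : Type*} [Fintype 𝒳] [Fintype 𝒴]
    (P0 : 𝒳 → ℝ)
    (W : 𝒳 → 𝒴 → ℝ) (hWsum : ∀ x, ∑ y, W x y = 1)
    (Q0 Q1 : 𝒴 → ℝ)
    (hQ0 : ∀ y, Q0 y = ∑ x, P0 x * W x y)
    (hQ0pos : ∀ y, 0 < Q0 y) (hQ1pos : ∀ y, 0 < Q1 y)
    (f : 𝒳 → ℝ) (hf : ∑ x, P0 x * f x = 0)
    (g : 𝒴 → ℝ) (hg : ∀ y, g y = (∑ x, P0 x * W x y * f x) / Q0 y) :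
    Tendsto
      (fun ε : ℝ =>
        (KLdiv (fun y => ∑ x, P0 x * (1 + ε * f x) * W x y) Q1 - KLdiv Q0 Q1) / ε)
      (nhdsWithin 0 (Set.Ioi 0))
      (nhds (∑ y, Q0 y * g y * Real.log (Q0 y / Q1 y))) := by
  set T : 𝒴 → ℝ := fun y => ∑ x, P0 x * f x * W x y
  have hT_sum : ∑ y, T y = 0 := (sum_sum_mul_channel hWsum _).trans hf
  have hperturbed : ∀ ε y, ∑ x, P0 x * (1 + ε * f x) * W x y = Q0 y + ε * T y := by
    intro ε y
    simp only [hQ0, T, Finset.mul_sum, ← Finset.sum_add_distrib]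
    exact Finset.sum_congr rfl fun x _ => by ring
  have hQ0g : ∀ y, Q0 y * g y = T y := fun y => by
    rw [hg, mul_div_cancel₀ _ (hQ0pos y).ne']
    exact Finset.sum_congr rfl fun x _ => by ring
  simp_rw [hperturbed, hQ0g]
  exact tendsto_KLdiv_add_mul_slope_zero_right (fun y => (hQ0pos y).ne') (fun y => (hQ1pos y).ne')
    hT_sum

/-- For every `f : 𝒳 → ℝ` with `E[f(X)|S=0] = 0`,
`lim_{ε→0⁺} (D_KL(P̃_{Y|S=0}‖P_{Y|S=1}) − D_KL(P_{Y|S=0}‖P_{Y|S=1}))/ε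
  = E[g(Y)·log(P_{Y|S=0}(Y)/P_{Y|S=1}(Y)) | S=0]`, where `g(y) = E[f(X)|Y=y,S=0]`.
Here `P0 = P_{X|S=0}`, `P1 = P_{X|S=1}`, `W x y = W_{Y|X}(y|x)` is the channel,
`Q0 = P_{Y|S=0} = W ∘ P0`, `Q1 = P_{Y|S=1} = W ∘ P1` (both full support),
`P̃_{X|S=0}(x) = P0(x)(1 + ε f(x))`, and `P̃_{Y|S=0} = W ∘ P̃_{X|S=0}`. -/
theorem stmt12
    {𝒳 𝒴 : Type*} [Fintype 𝒳] [Fintype 𝒴]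
    (P0 P1 : 𝒳 → ℝ)
    (hP0pos : ∀ x, 0 < P0 x) (hP0sum : ∑ x, P0 x = 1)
    (hP1pos : ∀ x, 0 < P1 x) (hP1sum : ∑ x, P1 x = 1)
    (W : 𝒳 → 𝒴 → ℝ) (hWnn : ∀ x y, 0 ≤ W x y) (hWsum : ∀ x, ∑ y, W x y = 1)
    (Q0 Q1 : 𝒴 → ℝ)
    (hQ0 : ∀ y, Q0 y = ∑ x, P0 x * W x y) (hQ1 : ∀ y, Q1 y = ∑ x, P1 x * W x y)
    (hQ0pos : ∀ y, 0 < Q0 y) (hQ1pos : ∀ y, 0 < Q1 y)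
    (f : 𝒳 → ℝ) (hf : ∑ x, P0 x * f x = 0)
    (g : 𝒴 → ℝ) (hg : ∀ y, g y = (∑ x, P0 x * W x y * f x) / Q0 y) :
    Tendsto
      (fun ε : ℝ =>
        (KLdiv (fun y => ∑ x, P0 x * (1 + ε * f x) * W x y) Q1 - KLdiv Q0 Q1) / ε)
      (nhdsWithin 0 (Set.Ioi 0))
      (nhds (∑ y, Q0 y * g y * Real.log (Q0 y / Q1 y))) :=
  stmt12_general P0 W hWsum Q0 Q1 hQ0 hQ0pos hQ1pos f hf g hg
end
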